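/- arXiv:2509.22888 — 3 statements merged into one kernel-verified Lean document; each statement's English description precedes it below -/
import Mathlib

section
/- There exist a dimension d ≥ 2 and vectors E_{M1}, E_{M2}, E_{Q1}, E_{Q2} in ℝ^d with E_{Q1} ≠ 0 and E_{Q2} ≠ 0 such that Θ(M1,Q1) > Θ(M2,Q1) and Θ(M2,Q2) > Θ(M1,Q2); that is, in the JE-IRT framework there is no global ordering of model ability scores across questions. -/
/-- Ability score of a model with embedding `EM` on a question with embedding `EQ`:
`Θ(M,Q) = (E_Q ⋅ E_M)/‖E_Q‖`. -/
noncomputable def ability {d : ℕ} (EM EQ : EuclideanSpace ℝ (Fin d)) : ℝ :=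
  (inner ℝ EQ EM : ℝ) / ‖EQ‖

theorem ability_single_one {d : ℕ} (EM : EuclideanSpace ℝ (Fin d)) (i : Fin d) :
    ability EM (EuclideanSpace.single i 1) = EM i := by
  simp [ability, EuclideanSpace.inner_single_left]

/-- No global ordering of model ability scores across questions in JE-IRT. -/
theorem no_global_ability_ordering :
    ∃ (d : ℕ), 2 ≤ d ∧
      ∃ (EM1 EM2 EQ1 EQ2 : EuclideanSpace ℝ (Fin d)),
        EQ1 ≠ 0 ∧ EQ2 ≠ 0 ∧
        ability EM1 EQ1 > ability EM2 EQ1 ∧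
        ability EM2 EQ2 > ability EM1 EQ2 := by
  set e : Fin 2 → EuclideanSpace ℝ (Fin 2) := fun i ↦ EuclideanSpace.single i 1
  refine ⟨2, le_rfl, e 0, e 1, e 0, e 1, ?_, ?_, ?_, ?_⟩ <;>
    simp [e, ability_single_one]
end

section
/- (Bounded Ability Shift for Similar Questions.) Let E_M be a vector in ℝ^d and let E_{Q1}, E_{Q2} be nonzero vectors in ℝ^d with cos(E_{Q1}, E_{Q2}) = 1 − ε for some ε > 0. Then |Θ(M,Q1) − Θ(M,Q2)| ≤ √(2ε) · ‖E_M‖. -/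
/-- Cosine similarity `cos(u,v) = (u ⋅ v)/(‖u‖‖v‖)`. -/
noncomputable def cosSim {d : ℕ} (u v : EuclideanSpace ℝ (Fin d)) : ℝ :=
  (inner ℝ u v : ℝ) / (‖u‖ * ‖v‖)

open NormedSpace RealInnerProductSpace

theorem NormedSpace.norm_normalize_le_one {V : Type*} [NormedAddCommGroup V] [NormedSpace ℝ V]
    (x : V) : ‖normalize x‖ ≤ 1 := by
  rw [NormedSpace.normalize, norm_smul, norm_inv, norm_norm]
  exact inv_mul_le_one

section InnerProductSpace

variable {E : Type*} [NormedAddCommGroup E] [InnerProductSpace ℝ E]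

theorem real_inner_normalize_normalize (u v : E) :
    ⟪normalize u, normalize v⟫ = ⟪u, v⟫ / (‖u‖ * ‖v‖) := by
  rw [NormedSpace.normalize, NormedSpace.normalize, real_inner_smul_left, real_inner_smul_right, div_eq_inv_mul, mul_inv]
  ring

theorem norm_normalize_sub_normalize_sq_le (u v : E) :
    ‖normalize u - normalize v‖ ^ 2 ≤ 2 - 2 * (⟪u, v⟫ / (‖u‖ * ‖v‖)) := by
  rw [norm_sub_sq_real, real_inner_normalize_normalize]
  have hu := pow_le_one₀ (norm_nonneg _) (norm_normalize_le_one u) (n := 2)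
  have hv := pow_le_one₀ (norm_nonneg _) (norm_normalize_le_one v) (n := 2)
  linarith

end InnerProductSpace

theorem ability_eq_inner_normalize {d : ℕ} (EM EQ : EuclideanSpace ℝ (Fin d)) :
    ability EM EQ = ⟪normalize EQ, EM⟫ := by
  rw [ability, NormedSpace.normalize, real_inner_smul_left, div_eq_inv_mul]

theorem abs_ability_sub_le {d : ℕ} (EM EQ1 EQ2 : EuclideanSpace ℝ (Fin d)) :
    |ability EM EQ1 - ability EM EQ2| ≤ √(2 - 2 * cosSim EQ1 EQ2) * ‖EM‖ :=
  calc |ability EM EQ1 - ability EM EQ2| = |⟪normalize EQ1 - normalize EQ2, EM⟫| := by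
        rw [ability_eq_inner_normalize, ability_eq_inner_normalize, inner_sub_left]
    _ ≤ ‖normalize EQ1 - normalize EQ2‖ * ‖EM‖ := abs_real_inner_le_norm _ _
    _ ≤ √(2 - 2 * cosSim EQ1 EQ2) * ‖EM‖ := by
        gcongr
        exact Real.le_sqrt_of_sq_le (norm_normalize_sub_normalize_sq_le EQ1 EQ2)

theorem bounded_ability_shift_general {d : ℕ}
    (EM EQ1 EQ2 : EuclideanSpace ℝ (Fin d))
    (ε : ℝ) (hcos : cosSim EQ1 EQ2 = 1 - ε) :
    |ability EM EQ1 - ability EM EQ2| ≤ Real.sqrt (2 * ε) * ‖EM‖ := by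
  have h := abs_ability_sub_le EM EQ1 EQ2
  rwa [hcos, show 2 - 2 * (1 - ε) = 2 * ε by ring] at h

/-- Bounded Ability Shift for Similar Questions. -/
theorem bounded_ability_shift {d : ℕ}
    (EM EQ1 EQ2 : EuclideanSpace ℝ (Fin d)) (hQ1 : EQ1 ≠ 0) (hQ2 : EQ2 ≠ 0)
    (ε : ℝ) (hε : 0 < ε) (hcos : cosSim EQ1 EQ2 = 1 - ε) :
    |ability EM EQ1 - ability EM EQ2| ≤ Real.sqrt (2 * ε) * ‖EM‖ :=
  bounded_ability_shift_general EM EQ1 EQ2 ε hcos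
end

section
/- (Stability of Predicted Probabilities Under Similar Questions.) Let E_M be a vector in ℝ^d and let E_{Q1}, E_{Q2} be nonzero vectors in ℝ^d with cos(E_{Q1}, E_{Q2}) = 1 − ε for some ε > 0. Then |P(M,Q1) − P(M,Q2)| ≤ (1/4)·(√(2ε)·‖E_M‖ + |‖E_{Q1}‖ − ‖E_{Q2}‖|). -/
/-- The logistic sigmoid `σ(t) = 1/(1 + e^{-t})`. -/
noncomputable def sigmoid (t : ℝ) : ℝ := 1 / (1 + Real.exp (-t))

/-- Predicted correctness probability `P(M,Q) = σ(Θ(M,Q) - ‖E_Q‖)`. -/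
noncomputable def predProb {d : ℕ} (EM EQ : EuclideanSpace ℝ (Fin d)) : ℝ :=
  sigmoid (ability EM EQ - ‖EQ‖)

theorem Real.lipschitzWith_sigmoid : LipschitzWith 4⁻¹ Real.sigmoid := by
  refine lipschitzWith_of_nnnorm_deriv_le differentiable_sigmoid fun x ↦ ?_
  rw [← NNReal.coe_le_coe, coe_nnnorm, Real.deriv_sigmoid, Real.norm_eq_abs,
    abs_of_nonneg (mul_nonneg (Real.sigmoid_nonneg x) (by linarith [Real.sigmoid_le_one x]))]
  push_cast
  nlinarith [sq_nonneg (Real.sigmoid x - 1 / 2)]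

theorem sigmoid_eq_real_sigmoid : sigmoid = Real.sigmoid :=
  funext fun _ ↦ one_div _

theorem abs_sigmoid_sub_sigmoid_le (a b : ℝ) : |sigmoid a - sigmoid b| ≤ 1 / 4 * |a - b| := by
  simpa [sigmoid_eq_real_sigmoid, ← Real.dist_eq] using Real.lipschitzWith_sigmoid.dist_le_mul a b

section InnerProductSpace

variable {E : Type*} [NormedAddCommGroup E] [InnerProductSpace ℝ E]

theorem norm_inv_norm_smul_le_one (x : E) : ‖‖x‖⁻¹ • x‖ ≤ 1 := by
  rw [norm_smul, norm_inv, norm_norm]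
  exact inv_mul_le_one_of_le₀ le_rfl (norm_nonneg x)

theorem real_inner_inv_norm_smul_inv_norm_smul (x y : E) :
    inner ℝ (‖x‖⁻¹ • x) (‖y‖⁻¹ • y) = inner ℝ x y / (‖x‖ * ‖y‖) := by
  rw [real_inner_smul_left, real_inner_smul_right, div_eq_inv_mul, mul_inv]
  ring

theorem norm_inv_norm_smul_sub_inv_norm_smul_sq_le (x y : E) :
    ‖‖x‖⁻¹ • x - ‖y‖⁻¹ • y‖ ^ 2 ≤ 2 * (1 - inner ℝ x y / (‖x‖ * ‖y‖)) := by
  rw [norm_sub_sq_real, real_inner_inv_norm_smul_inv_norm_smul]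
  have hx := norm_inv_norm_smul_le_one x
  have hy := norm_inv_norm_smul_le_one y
  nlinarith [norm_nonneg (‖x‖⁻¹ • x), norm_nonneg (‖y‖⁻¹ • y)]

end InnerProductSpace

theorem ability_eq_inner_inv_norm_smul {d : ℕ} (EM EQ : EuclideanSpace ℝ (Fin d)) :
    ability EM EQ = inner ℝ (‖EQ‖⁻¹ • EQ) EM := by
  rw [ability, real_inner_smul_left, div_eq_inv_mul]

theorem abs_ability_sub_ability_le {d : ℕ} (EM EQ1 EQ2 : EuclideanSpace ℝ (Fin d)) :
    |ability EM EQ1 - ability EM EQ2| ≤ Real.sqrt (2 * (1 - cosSim EQ1 EQ2)) * ‖EM‖ := by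
  rw [ability_eq_inner_inv_norm_smul, ability_eq_inner_inv_norm_smul, ← inner_sub_left]
  calc _ ≤ ‖‖EQ1‖⁻¹ • EQ1 - ‖EQ2‖⁻¹ • EQ2‖ * ‖EM‖ := abs_real_inner_le_norm _ _
    _ ≤ _ := by
      gcongr
      exact Real.le_sqrt_of_sq_le (norm_inv_norm_smul_sub_inv_norm_smul_sq_le EQ1 EQ2)

theorem predProb_stability_general {d : ℕ}
    (EM EQ1 EQ2 : EuclideanSpace ℝ (Fin d))
    (ε : ℝ) (hcos : cosSim EQ1 EQ2 = 1 - ε) :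
    |predProb EM EQ1 - predProb EM EQ2| ≤
      (1 / 4) * (Real.sqrt (2 * ε) * ‖EM‖ + |‖EQ1‖ - ‖EQ2‖|) := by
  have hability := abs_ability_sub_ability_le EM EQ1 EQ2
  rw [hcos, sub_sub_cancel] at hability
  calc |predProb EM EQ1 - predProb EM EQ2|
      ≤ 1 / 4 * |(ability EM EQ1 - ability EM EQ2) - (‖EQ1‖ - ‖EQ2‖)| := by
        rw [predProb, predProb, sub_sub_sub_comm]
        exact abs_sigmoid_sub_sigmoid_le _ _
    _ ≤ 1 / 4 * (|ability EM EQ1 - ability EM EQ2| + |‖EQ1‖ - ‖EQ2‖|) := by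
        gcongr
        exact abs_sub _ _
    _ ≤ 1 / 4 * (Real.sqrt (2 * ε) * ‖EM‖ + |‖EQ1‖ - ‖EQ2‖|) := by
        gcongr

/-- Stability of Predicted Probabilities Under Similar Questions. -/
theorem predProb_stability {d : ℕ}
    (EM EQ1 EQ2 : EuclideanSpace ℝ (Fin d)) (hQ1 : EQ1 ≠ 0) (hQ2 : EQ2 ≠ 0)
    (ε : ℝ) (hε : 0 < ε) (hcos : cosSim EQ1 EQ2 = 1 - ε) :
    |predProb EM EQ1 - predProb EM EQ2| ≤
      (1 / 4) * (Real.sqrt (2 * ε) * ‖EM‖ + |‖EQ1‖ - ‖EQ2‖|) :=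
  predProb_stability_general EM EQ1 EQ2 ε hcos
end
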